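/- arXiv:2101.08830 — 2 statements merged into one kernel-verified Lean document; each statement's English description precedes it below -/
import Mathlib

section
/- Let C ⊆ ℝⁿ be a nonempty closed convex set and f : ℝⁿ → ℝ be continuously differentiable and convex, with ∇f L-Lipschitz on C (L > 0) and satisfying condition (B) on C. Let (x^k), (p^k), (v_k) be Frank–Wolfe sequences for f on C with v_k < 0 for all k. Then every cluster point x* of (x^k) is a solution of the problem min_{z∈C} f(z), i.e., f(x*) ≤ f(z) for all z ∈ C. -/
/-!
With the step size `λₖ = min 1 (|vₖ| / (L ‖pₖ - xₖ‖²))`, the descent lemma for an `L`-Lipschitz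
gradient gives `f xₖ₊₁ + λₖ |vₖ| / 2 ≤ f xₖ`. Hence `f xₖ` decreases to `f x*` and
`λₖ |vₖ| → 0`. If some `z ∈ C` had `f z < f x*`, convexity would keep `|vₖ|` bounded away from
zero along the subsequence converging to `x*`, which forces `‖pₖ - xₖ‖ → ∞` there. The normalized
directions `(pₖ - xₖ) / ‖pₖ - xₖ‖` then accumulate at a unit vector of the asymptotic cone of `C`
on which `⟪∇f x*, ·⟫ ≤ 0`, contradicting condition (B).
-/

open scoped RealInnerProductSpace
open Filter Topology Set

noncomputable def frankWolfeStepSize {E : Type*} [Norm E] (L v : ℝ) (d : E) : ℝ :=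
  min 1 (|v| / (L * ‖d‖ ^ 2))

section StepSize

variable {E : Type*} [NormedAddCommGroup E] {L v δ : ℝ} {d : E}

theorem frankWolfeStepSize_nonneg (hL : 0 ≤ L) : 0 ≤ frankWolfeStepSize L v d :=
  le_min zero_le_one (by positivity)

theorem frankWolfeStepSize_le_one : frankWolfeStepSize L v d ≤ 1 :=
  min_le_left _ _

theorem frankWolfeStepSize_mul_le (hL : 0 ≤ L) :
    frankWolfeStepSize L v d * (L * ‖d‖ ^ 2) ≤ |v| := by
  rcases (by positivity : 0 ≤ L * ‖d‖ ^ 2).eq_or_lt with h | h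
  · simp [← h]
  · exact (le_div_iff₀ h).1 (min_le_right _ _)

theorem sq_le_mul_frankWolfeStepSize_mul (hL : 0 < L) (hd : d ≠ 0) (hδv : δ ≤ |v|)
    (hlt : frankWolfeStepSize L v d * |v| < δ) :
    δ ^ 2 ≤ L * ‖d‖ ^ 2 * (frankWolfeStepSize L v d * |v|) := by
  have hLd : 0 < L * ‖d‖ ^ 2 := by positivity
  have hstep : frankWolfeStepSize L v d = |v| / (L * ‖d‖ ^ 2) := by
    refine min_eq_right_iff.2 (le_of_not_ge fun h1 => ?_)
    rw [frankWolfeStepSize, min_eq_left h1, one_mul] at hlt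
    linarith
  have hδ : 0 ≤ δ := (mul_nonneg (frankWolfeStepSize_nonneg hL.le) (abs_nonneg v)).trans hlt.le
  rw [hstep, ← mul_assoc, mul_div_cancel₀ _ hLd.ne', ← sq]
  exact pow_le_pow_left₀ hδ hδv 2

theorem tendsto_norm_atTop_of_frankWolfeStepSize {ι : Type*} {l : Filter ι} (hL : 0 < L)
    (hδ : 0 < δ) {v : ι → ℝ} {d : ι → E} (hd : ∀ i, d i ≠ 0) (hv : ∀ᶠ i in l, δ ≤ |v i|)
    (hgap : Tendsto (fun i => frankWolfeStepSize L (v i) (d i) * |v i|) l (𝓝 0)) :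
    Tendsto (fun i => ‖d i‖) l atTop := by
  set m := fun i => frankWolfeStepSize L (v i) (d i) * |v i|
  have hbound : ∀ᶠ i in l, δ ^ 2 ≤ L * ‖d i‖ ^ 2 * m i := by
    filter_upwards [hv, hgap.eventually (gt_mem_nhds hδ)] with i hvi hmi
    exact sq_le_mul_frankWolfeStepSize_mul hL (hd i) hvi hmi
  have hm_pos : ∀ᶠ i in l, 0 < m i := hbound.mono fun i hi =>
    pos_of_mul_pos_right ((pow_pos hδ 2).trans_le hi) (by positivity)
  have hm : Tendsto m l (𝓝[>] 0) := tendsto_nhdsWithin_iff.2 ⟨hgap, hm_pos⟩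
  have hsq : Tendsto (fun i => ‖d i‖ ^ 2) l atTop := by
    refine tendsto_atTop_mono' l ?_ (hm.inv_tendsto_nhdsGT_zero.const_mul_atTop
      (by positivity : 0 < δ ^ 2 / L))
    filter_upwards [hbound, hm_pos] with i hi hmi
    rw [Pi.inv_apply, ← div_eq_mul_inv, div_div, div_le_iff₀ (by positivity)]
    linarith
  exact (Real.tendsto_sqrt_atTop.comp hsq).congr fun i => Real.sqrt_sq (norm_nonneg _)

theorem frankWolfe_mem [Module ℝ E] {C : Set E} (hC : Convex ℝ C) (hL : 0 ≤ L)
    {x p : ℕ → E} {v : ℕ → ℝ} (hx0 : x 0 ∈ C) (hp : ∀ k, p k ∈ C)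
    (hiter : ∀ k, x (k + 1) = x k + frankWolfeStepSize L (v k) (p k - x k) • (p k - x k))
    (k : ℕ) : x k ∈ C := by
  induction k with
  | zero => exact hx0
  | succ k ih =>
    rw [hiter k]
    exact hC.add_smul_sub_mem ih (hp k) ⟨frankWolfeStepSize_nonneg hL, frankWolfeStepSize_le_one⟩

end StepSize

theorem tendsto_zero_of_add_le_of_tendsto_comp {a b : ℕ → ℝ} (hab : ∀ k, a (k + 1) + b k ≤ a k)
    (hb : ∀ k, 0 ≤ b k) {φ : ℕ → ℕ} (hφ : Tendsto φ atTop atTop) {c : ℝ}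
    (ha : Tendsto (fun j => a (φ j)) atTop (𝓝 c)) : Tendsto b atTop (𝓝 0) := by
  have hanti : Antitone a := antitone_nat_of_succ_le fun k => by linarith [hab k, hb k]
  have hlim : Tendsto a atTop (𝓝 c) := (tendsto_iff_tendsto_subseq_of_antitone hanti hφ).2 ha
  have hdiff : Tendsto (fun k => a k - a (k + 1)) atTop (𝓝 0) := by
    simpa using hlim.sub (hlim.comp (tendsto_add_atTop_nat 1))
  exact squeeze_zero hb (fun k => by linarith [hab k]) hdiff

section InnerProductSpace

variable {E : Type*} [NormedAddCommGroup E] [InnerProductSpace ℝ E]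

theorem not_tendsto_norm_sub_atTop_of_inner_nonpos [ProperSpace E] {C : Set E} {g : E → E}
    {a : E} (hg : ContinuousAt g a) (hB : ∀ d ∈ asymptoticCone ℝ C, d ≠ 0 → 0 < ⟪g a, d⟫)
    {y q : ℕ → E} (hy : Tendsto y atTop (𝓝 a)) (hq : ∀ j, q j ∈ C)
    (hneg : ∀ j, ⟪g (y j), q j - y j⟫ ≤ 0) :
    ¬ Tendsto (fun j => ‖q j - y j‖) atTop atTop := by
  intro hN
  set u : ℕ → E := fun j => ‖q j - y j‖⁻¹ • (q j - y j)
  have hu_le : ∀ j, u j ∈ Metric.closedBall 0 1 := fun j => by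
    rw [mem_closedBall_zero_iff, norm_smul, norm_inv, norm_norm]
    exact inv_mul_le_one_of_le₀ le_rfl (norm_nonneg _)
  obtain ⟨w, -, ψ, hψ, huw⟩ := (isCompact_closedBall (0 : E) 1).tendsto_subseq hu_le
  have hNψ := hN.comp hψ.tendsto_atTop
  have hyψ := hy.comp hψ.tendsto_atTop
  have hN_pos : ∀ᶠ j in atTop, 0 < ‖q (ψ j) - y (ψ j)‖ := hNψ.eventually_gt_atTop 0
  have hw_norm : ‖w‖ = 1 := by
    refine tendsto_nhds_unique huw.norm (tendsto_const_nhds.congr' ?_)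
    filter_upwards [hN_pos] with j hj
    exact (norm_smul_inv_norm (norm_pos_iff.1 hj)).symm
  have hw_cone : w ∈ asymptoticCone ℝ C := by
    have hsq : Tendsto (fun j => ‖q (ψ j) - y (ψ j)‖⁻¹ • q (ψ j)) atTop (𝓝 w) := by
      have h := huw.add (hNψ.inv_tendsto_atTop.smul hyψ)
      rw [zero_smul, add_zero] at h
      refine h.congr fun j => ?_
      simp [u, smul_sub]
    refine (hNψ.atTop_smul_nhds_tendsto_asymptoticNhds hsq).frequently
      (Eventually.frequently ?_)
    filter_upwards [hN_pos] with j hj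
    rw [Function.comp_apply, smul_inv_smul₀ hj.ne']
    exact hq (ψ j)
  have hlim : ⟪g a, w⟫ ≤ 0 := by
    refine le_of_tendsto' ((hg.tendsto.comp hyψ).inner huw) fun j => ?_
    simp only [Function.comp_apply, u, real_inner_smul_right]
    exact mul_nonpos_of_nonneg_of_nonpos (by positivity) (hneg (ψ j))
  exact (hlim.not_gt (hB w hw_cone (norm_ne_zero_iff.1 (hw_norm ▸ one_ne_zero))))

variable [CompleteSpace E]

theorem ContDiff.continuous_gradient {f : E → ℝ} (hf : ContDiff ℝ 1 f) :
    Continuous (gradient f) :=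
  (InnerProductSpace.toDual ℝ E).symm.continuous.comp (hf.continuous_fderiv one_ne_zero)

theorem HasGradientAt.hasDerivAt_add_smul {f : E → ℝ} {f' x d : E} {t : ℝ}
    (h : HasGradientAt f f' (x + t • d)) :
    HasDerivAt (fun s : ℝ => f (x + s • d)) ⟪f', d⟫ t := by
  have hline : HasDerivAt (fun s : ℝ => x + s • d) d t := by
    simpa using ((hasDerivAt_id t).smul_const d).const_add x
  exact h.hasFDerivAt.comp_hasDerivAt t hline

theorem ConvexOn.inner_le_sub_of_hasGradientAt {s : Set E} {f : E → ℝ} {f' a b : E}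
    (hf : ConvexOn ℝ s f) (ha : a ∈ s) (hb : b ∈ s) (hfa : HasGradientAt f f' a) :
    ⟪f', b - a⟫ ≤ f b - f a := by
  set ℓ : ℝ →ᵃ[ℝ] E := AffineMap.lineMap a b
  have hderiv : HasDerivAt (f ∘ ℓ) ⟪f', b - a⟫ 0 := by
    have := (AffineMap.lineMap_apply_zero a b (k := ℝ)).symm ▸ hfa.hasFDerivAt
    exact this.comp_hasDerivAt (0 : ℝ) AffineMap.hasDerivAt_lineMap
  simpa [slope_def_field, ℓ] using (hf.comp_affineMap ℓ).le_slope_of_hasDerivAt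
    (by simpa [ℓ] using ha) (by simpa [ℓ] using hb) zero_lt_one hderiv

theorem le_add_inner_gradient_add_of_lipschitz {f : E → ℝ} {C : Set E} {L : ℝ}
    (hf : Differentiable ℝ f) (hC : Convex ℝ C)
    (hLip : ∀ a ∈ C, ∀ b ∈ C, ‖gradient f a - gradient f b‖ ≤ L * ‖a - b‖)
    {x d : E} (hx : x ∈ C) (hxd : x + d ∈ C) :
    f (x + d) ≤ f x + ⟪gradient f x, d⟫ + L / 2 * ‖d‖ ^ 2 := by
  set c := ⟪gradient f x, d⟫
  set h : ℝ → ℝ := fun t => f (x + t • d) - c * t - L / 2 * ‖d‖ ^ 2 * t ^ 2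
  have hh : ∀ t, HasDerivAt h (⟪gradient f (x + t • d), d⟫ - c - L * ‖d‖ ^ 2 * t) t := fun t => by
    have hline : HasDerivAt (fun s : ℝ => f (x + s • d)) ⟪gradient f (x + t • d), d⟫ t :=
      (hf _).hasGradientAt.hasDerivAt_add_smul
    refine ((hline.sub ((hasDerivAt_id t).const_mul c)).sub
      ((hasDerivAt_pow 2 t).const_mul (L / 2 * ‖d‖ ^ 2))).congr_deriv ?_
    ring
  have hanti : AntitoneOn h (Icc 0 1) := by
    refine antitoneOn_of_hasDerivWithinAt_nonpos (convex_Icc 0 1)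
      (fun t _ => (hh t).continuousAt.continuousWithinAt) (fun t _ => (hh t).hasDerivWithinAt)
      fun t ht => ?_
    rw [interior_Icc] at ht
    have hxt : x + t • d ∈ C := hC.add_smul_mem hx hxd ⟨ht.1.le, ht.2.le⟩
    calc ⟪gradient f (x + t • d), d⟫ - c - L * ‖d‖ ^ 2 * t
        = ⟪gradient f (x + t • d) - gradient f x, d⟫ - L * ‖d‖ ^ 2 * t := by
          rw [inner_sub_left]
      _ ≤ ‖gradient f (x + t • d) - gradient f x‖ * ‖d‖ - L * ‖d‖ ^ 2 * t := by
          gcongr; exact real_inner_le_norm _ _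
      _ ≤ L * ‖x + t • d - x‖ * ‖d‖ - L * ‖d‖ ^ 2 * t := by
          gcongr; exact hLip _ hxt _ hx
      _ = 0 := by
          rw [add_sub_cancel_left, norm_smul, Real.norm_of_nonneg ht.1.le]
          ring
  have h01 := hanti (left_mem_Icc.2 zero_le_one) (right_mem_Icc.2 zero_le_one) zero_le_one
  simp only [h, zero_smul, add_zero, one_smul, mul_zero, mul_one, sub_zero, one_pow] at h01
  linarith

theorem frankWolfeStep_sufficient_decrease {f : E → ℝ} {C : Set E} {L : ℝ} (hL : 0 ≤ L)
    (hf : Differentiable ℝ f) (hC : Convex ℝ C)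
    (hLip : ∀ a ∈ C, ∀ b ∈ C, ‖gradient f a - gradient f b‖ ≤ L * ‖a - b‖)
    {x d : E} (hx : x ∈ C) (hxd : x + d ∈ C) (hv : ⟪gradient f x, d⟫ ≤ 0) :
    f (x + frankWolfeStepSize L ⟪gradient f x, d⟫ d • d) +
      frankWolfeStepSize L ⟪gradient f x, d⟫ d * |⟪gradient f x, d⟫| / 2 ≤ f x := by
  set v := ⟪gradient f x, d⟫
  set τ := frankWolfeStepSize L v d
  have hτ0 : 0 ≤ τ := frankWolfeStepSize_nonneg hL
  have hquad := le_add_inner_gradient_add_of_lipschitz hf hC hLip hx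
    (hC.add_smul_mem hx hxd ⟨hτ0, frankWolfeStepSize_le_one⟩)
  have hquad_le : L / 2 * ‖τ • d‖ ^ 2 ≤ τ * |v| / 2 :=
    calc L / 2 * ‖τ • d‖ ^ 2 = τ * (τ * (L * ‖d‖ ^ 2)) / 2 := by
          rw [norm_smul, Real.norm_of_nonneg hτ0]; ring
      _ ≤ τ * |v| / 2 := by gcongr; exact frankWolfeStepSize_mul_le hL
  rw [real_inner_smul_right] at hquad
  rw [abs_of_nonpos hv] at hquad_le ⊢
  linarith

theorem eventually_inner_gradient_sub_lt {s : Set E} {f : E → ℝ} {a z : E}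
    (hf : ConvexOn ℝ s f) (ha : a ∈ s) (hz : z ∈ s) (hfa : DifferentiableAt ℝ f a)
    (hgrad : ContinuousAt (gradient f) a) (hlt : f z < f a) {ι : Type*} {l : Filter ι}
    {y : ι → E} (hy : Tendsto y l (𝓝 a)) :
    ∀ᶠ i in l, ⟪gradient f (y i), z - y i⟫ < (f z - f a) / 2 := by
  have hlim : Tendsto (fun i => ⟪gradient f (y i), z - y i⟫) l (𝓝 ⟪gradient f a, z - a⟫) :=
    (hgrad.tendsto.comp hy).inner (tendsto_const_nhds.sub hy)
  have hle := hf.inner_le_sub_of_hasGradientAt ha hz hfa.hasGradientAt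
  exact hlim.eventually (gt_mem_nhds (by linarith))

end InnerProductSpace

theorem frank_wolfe_cluster_point_solution_general (n : ℕ) (C : Set (EuclideanSpace ℝ (Fin n)))
    (hCcl : IsClosed C) (hCconv : Convex ℝ C)
    (f : EuclideanSpace ℝ (Fin n) → ℝ) (hf : ContDiff ℝ 1 f)
    (hconv : ConvexOn ℝ Set.univ f)
    (L : ℝ) (hL : 0 < L)
    (hLip : ∀ a ∈ C, ∀ b ∈ C, ‖gradient f a - gradient f b‖ ≤ L * ‖a - b‖)
    (hB : ∀ a ∈ C, ∀ d : EuclideanSpace ℝ (Fin n),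
      (∀ y ∈ C, ∀ t : ℝ, 0 ≤ t → y + t • d ∈ C) → d ≠ 0 → 0 < ⟪gradient f a, d⟫)
    (x p : ℕ → EuclideanSpace ℝ (Fin n)) (v : ℕ → ℝ)
    (hx0 : x 0 ∈ C) (hpC : ∀ k, p k ∈ C)
    (hpmin : ∀ k, ∀ q ∈ C, ⟪gradient f (x k), p k - x k⟫ ≤ ⟪gradient f (x k), q - x k⟫)
    (hv : ∀ k, v k = ⟪gradient f (x k), p k - x k⟫)
    (hiter : ∀ k, x (k + 1) =
      x k + (min 1 (|v k| / (L * ‖p k - x k‖ ^ 2))) • (p k - x k))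
    (hvneg : ∀ k, v k < 0)
    (xstar : EuclideanSpace ℝ (Fin n))
    (hcluster : ∃ φ : ℕ → ℕ, StrictMono φ ∧
      Filter.Tendsto (fun j => x (φ j)) Filter.atTop (nhds xstar)) :
    xstar ∈ C ∧ ∀ z ∈ C, f xstar ≤ f z := by
  obtain ⟨φ, hφ, hxφ⟩ := hcluster
  have hdiff : Differentiable ℝ f := hf.differentiable one_ne_zero
  have hxC : ∀ k, x k ∈ C := frankWolfe_mem hCconv hL.le hx0 hpC hiter
  have hxstarC : xstar ∈ C := hCcl.mem_of_tendsto hxφ (.of_forall fun j => hxC (φ j))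
  refine ⟨hxstarC, fun z hz => ?_⟩
  by_contra! hlt
  have hdesc : ∀ k, f (x (k + 1)) + frankWolfeStepSize L (v k) (p k - x k) * |v k| / 2 ≤ f (x k) :=
    fun k => by
      rw [hiter k, hv k]
      exact frankWolfeStep_sufficient_decrease hL.le hdiff hCconv hLip (hxC k)
        (by rw [add_sub_cancel]; exact hpC k) (hv k ▸ (hvneg k).le)
  have hgap : Tendsto (fun k => frankWolfeStepSize L (v k) (p k - x k) * |v k|) atTop (𝓝 0) := by
    have h := tendsto_zero_of_add_le_of_tendsto_comp (a := fun k => f (x k)) hdesc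
      (fun k => by have := frankWolfeStepSize_nonneg (v := v k) (d := p k - x k) hL.le; positivity)
      hφ.tendsto_atTop ((hf.continuous.tendsto xstar).comp hxφ)
    simpa only [mul_div_cancel₀ _ (two_ne_zero (α := ℝ)), mul_zero] using h.const_mul 2
  have hδ : ∀ᶠ j in atTop, (f xstar - f z) / 2 ≤ |v (φ j)| := by
    filter_upwards [eventually_inner_gradient_sub_lt hconv (mem_univ _) (mem_univ _)
      (hdiff xstar) hf.continuous_gradient.continuousAt hlt hxφ] with j hj
    rw [abs_of_neg (hvneg _), hv]
    linarith [hpmin (φ j) z hz]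
  have hnorm : Tendsto (fun j => ‖p (φ j) - x (φ j)‖) atTop atTop :=
    tendsto_norm_atTop_of_frankWolfeStepSize hL (by linarith)
      (fun j h => (hvneg (φ j)).ne (by rw [hv, h, inner_zero_right])) hδ
      (hgap.comp hφ.tendsto_atTop)
  have hBstar : ∀ d ∈ asymptoticCone ℝ C, d ≠ 0 → 0 < ⟪gradient f xstar, d⟫ :=
    fun d hdC hd0 => hB xstar hxstarC d (fun y hy t ht => by
      simpa [add_comm] using hCconv.smul_vadd_mem_of_isClosed_of_mem_asymptoticCone hCcl ht hdC hy)
      hd0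
  exact not_tendsto_norm_sub_atTop_of_inner_nonpos hf.continuous_gradient.continuousAt hBstar hxφ
    (fun j => hpC (φ j)) (fun j => (hv _ ▸ hvneg _).le) hnorm

/-- If `f` is moreover convex, every cluster point of a Frank–Wolfe sequence is a solution
of the problem of minimizing `f` over `C`. -/
theorem frank_wolfe_cluster_point_solution (n : ℕ) (C : Set (EuclideanSpace ℝ (Fin n)))
    (hCne : C.Nonempty) (hCcl : IsClosed C) (hCconv : Convex ℝ C)
    (f : EuclideanSpace ℝ (Fin n) → ℝ) (hf : ContDiff ℝ 1 f)
    (hconv : ConvexOn ℝ Set.univ f)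
    (L : ℝ) (hL : 0 < L)
    (hLip : ∀ a ∈ C, ∀ b ∈ C, ‖gradient f a - gradient f b‖ ≤ L * ‖a - b‖)
    (hB : ∀ a ∈ C, ∀ d : EuclideanSpace ℝ (Fin n),
      (∀ y ∈ C, ∀ t : ℝ, 0 ≤ t → y + t • d ∈ C) → d ≠ 0 → 0 < ⟪gradient f a, d⟫)
    (x p : ℕ → EuclideanSpace ℝ (Fin n)) (v : ℕ → ℝ)
    (hx0 : x 0 ∈ C) (hpC : ∀ k, p k ∈ C)
    (hpmin : ∀ k, ∀ q ∈ C, ⟪gradient f (x k), p k - x k⟫ ≤ ⟪gradient f (x k), q - x k⟫)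
    (hv : ∀ k, v k = ⟪gradient f (x k), p k - x k⟫)
    (hiter : ∀ k, x (k + 1) =
      x k + (min 1 (|v k| / (L * ‖p k - x k‖ ^ 2))) • (p k - x k))
    (hvneg : ∀ k, v k < 0)
    (xstar : EuclideanSpace ℝ (Fin n))
    (hcluster : ∃ φ : ℕ → ℕ, StrictMono φ ∧
      Filter.Tendsto (fun j => x (φ j)) Filter.atTop (nhds xstar)) :
    xstar ∈ C ∧ ∀ z ∈ C, f xstar ≤ f z :=
  frank_wolfe_cluster_point_solution_general n C hCcl hCconv f hf hconv L hL hLip hB x p v hx0 hpC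
    hpmin hv hiter hvneg xstar hcluster
end

section
/- Let C ⊆ ℝⁿ be a nonempty closed convex set, M > 0, and f : ℝⁿ → ℝ be continuously differentiable and M-strongly convex on C, with ∇f L-Lipschitz on C (L > 0). Let (x^k), (p^k), (v_k) be Frank–Wolfe sequences for f on C with v_k < 0 for all k, and suppose (x^k) converges to a point x* ∈ C with f(x*) ≤ f(z) for all z ∈ C. Suppose σ > 0 satisfies ‖p^k − x^k‖ ≤ σ for all k, γ > 0 satisfies ‖∇f(x^k)‖ ≤ γ for all k, and set Γ := min{1/(2γσ), 1/(2Lσ²)}. Then ‖x^k − x*‖ ≤ √(2/(Γ·M))/√k for all k = 1, 2, …. -/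
open scoped RealInnerProductSpace

/-!
With the short step size, the descent lemma for an `L`-smooth function shows that a Frank–Wolfe
step decreases `f` by at least `λₖ |vₖ| / 2 ≥ Γ vₖ²`, while convexity bounds the optimality gap
`eₖ = f xᵏ - f x*` by `|vₖ|`. Hence `eₖ₊₁ ≤ eₖ - Γ eₖ²`, which forces `eₖ ≤ 1 / (Γ k)`, and
strong convexity at the minimiser `x*` turns this into `M / 2 ‖xᵏ - x*‖² ≤ 1 / (Γ k)`.
-/

open Set Filter Topology

lemma le_add_deriv_add_of_deriv_sub_le {g g' : ℝ → ℝ} {K : ℝ}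
    (hg : ∀ t ∈ Icc (0 : ℝ) 1, HasDerivAt g (g' t) t)
    (hK : ∀ t ∈ Ioo (0 : ℝ) 1, g' t - g' 0 ≤ K * t) :
    g 1 ≤ g 0 + g' 0 + K / 2 := by
  let φ : ℝ → ℝ := fun t => g t - t * g' 0 - K / 2 * t ^ 2
  have hφ : ∀ t ∈ Icc (0 : ℝ) 1, HasDerivAt φ (g' t - g' 0 - K * t) t := fun t ht => by
    refine (((hg t ht).sub ((hasDerivAt_id t).mul_const (g' 0))).sub
      ((hasDerivAt_pow 2 t).const_mul (K / 2))).congr_deriv ?_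
    simp only [one_mul, Nat.cast_ofNat]
    ring
  have hanti : AntitoneOn φ (Icc 0 1) := by
    refine antitoneOn_of_hasDerivWithinAt_nonpos (f' := fun t => g' t - g' 0 - K * t)
      (convex_Icc 0 1) (fun t ht => (hφ t ht).continuousAt.continuousWithinAt)
      (fun t ht => ?_) (fun t ht => ?_)
    · exact (hφ t (interior_subset ht)).hasDerivWithinAt
    · rw [interior_Icc] at ht
      linarith [hK t ht]
  have := hanti (left_mem_Icc.2 zero_le_one) (right_mem_Icc.2 zero_le_one) zero_le_one
  simp only [φ] at this
  linarith

lemma le_one_div_mul_of_le_sub_mul_sq {e : ℕ → ℝ} {Γ : ℝ} (hΓ : 0 < Γ)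
    (h : ∀ k, e (k + 1) ≤ e k - Γ * e k ^ 2) {k : ℕ} (hk : 1 ≤ k) :
    e k ≤ 1 / (Γ * k) := by
  suffices Γ * e k * k ≤ 1 by
    rw [le_div_iff₀ (by positivity)]
    linarith
  induction k, hk using Nat.le_induction with
  | base =>
    have := mul_le_mul_of_nonneg_left (h 0) hΓ.le
    simp only [Nat.cast_one, mul_one]
    nlinarith [sq_nonneg (Γ * e 0 - 1 / 2)]
  | succ k hk ih =>
    have hdec := mul_le_mul_of_nonneg_left (h k) hΓ.le
    have hk1 : (1 : ℝ) ≤ k := by exact_mod_cast hk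
    have hc1 : Γ * e k ≤ 1 := by nlinarith
    push_cast
    -- `1 - (c - c ^ 2) * (k + 1) = (1 - c * k) * (1 - c) + c ^ 2` for `c = Γ * e k`
    nlinarith [mul_le_mul_of_nonneg_right hdec (by positivity : (0 : ℝ) ≤ k + 1),
      mul_nonneg (sub_nonneg.2 ih) (sub_nonneg.2 hc1), sq_nonneg (Γ * e k)]

lemma mul_sq_le_min_mul_div_two {Γ L a s γ σ : ℝ} (hL : 0 < L) (hs : 0 < s) (hsσ : s ≤ σ)
    (ha : 0 ≤ a) (haγσ : a ≤ γ * σ) (hΓγ : Γ ≤ 1 / (2 * γ * σ)) (hΓL : Γ ≤ 1 / (2 * L * σ ^ 2)) :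
    Γ * a ^ 2 ≤ min 1 (a / (L * s ^ 2)) * a / 2 := by
  rcases min_cases 1 (a / (L * s ^ 2)) with ⟨hmin, -⟩ | ⟨hmin, -⟩ <;> rw [hmin]
  · rcases ha.eq_or_lt with rfl | ha
    · simp
    have : Γ ≤ 1 / (2 * a) :=
      hΓγ.trans (one_div_le_one_div_of_le (by positivity) (by linarith))
    calc Γ * a ^ 2 ≤ 1 / (2 * a) * a ^ 2 := by gcongr
      _ = 1 * a / 2 := by field_simp
  · have : Γ ≤ 1 / (2 * L * s ^ 2) :=
      hΓL.trans (one_div_le_one_div_of_le (by positivity) (by gcongr))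
    calc Γ * a ^ 2 ≤ 1 / (2 * L * s ^ 2) * a ^ 2 := by gcongr
      _ = a / (L * s ^ 2) * a / 2 := by field_simp

section NormedSpace

variable {E : Type*} [NormedAddCommGroup E] [NormedSpace ℝ E] {f : E → ℝ} {s : Set E} {x y : E}
  {m : ℝ}

lemma Convex.forall_mem_of_add_smul_sub {x p : ℕ → E} {t : ℕ → ℝ} (hs : Convex ℝ s)
    (hx0 : x 0 ∈ s) (hp : ∀ k, p k ∈ s) (ht : ∀ k, t k ∈ Icc 0 1)
    (hstep : ∀ k, x (k + 1) = x k + t k • (p k - x k)) : ∀ k, x k ∈ s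
  | 0 => hx0
  | k + 1 =>
    hstep k ▸ hs.add_smul_sub_mem (hs.forall_mem_of_add_smul_sub hx0 hp ht hstep k) (hp k) (ht k)

namespace StrongConvexOn

lemma apply_add_smul_sub_le (hf : StrongConvexOn s m f) (hx : x ∈ s) (hy : y ∈ s) {t : ℝ}
    (ht0 : 0 ≤ t) (ht1 : t ≤ 1) :
    f (x + t • (y - x)) ≤ f x + t * (f y - f x) - m / 2 * t * (1 - t) * ‖y - x‖ ^ 2 := by
  have h := hf.2 hy hx ht0 (sub_nonneg.2 ht1) (add_sub_cancel t 1)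
  rw [show t • y + (1 - t) • x = x + t • (y - x) by module] at h
  simp only [smul_eq_mul] at h
  linarith

lemma sq_norm_sub_le_of_isMinOn (hf : StrongConvexOn s m f) (hx : x ∈ s) (hy : y ∈ s)
    (hmin : IsMinOn f s x) :
    m / 2 * ‖y - x‖ ^ 2 ≤ f y - f x := by
  have hlim : Tendsto (fun t : ℝ => m / 2 * (1 - t) * ‖y - x‖ ^ 2) (𝓝[>] 0)
      (𝓝 (m / 2 * ‖y - x‖ ^ 2)) := by
    have hcont : Continuous fun t : ℝ => m / 2 * (1 - t) * ‖y - x‖ ^ 2 := by fun_prop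
    simpa using (hcont.tendsto 0).mono_left nhdsWithin_le_nhds
  refine le_of_tendsto hlim ?_
  filter_upwards [Ioc_mem_nhdsGT zero_lt_one] with t ht
  have hmid := isMinOn_iff.1 hmin _ (hf.1.add_smul_sub_mem hx hy ⟨ht.1.le, ht.2⟩)
  nlinarith [hf.apply_add_smul_sub_le hx hy ht.1.le ht.2, ht.1]

end StrongConvexOn

end NormedSpace

section InnerProductSpace

variable {E : Type*} [NormedAddCommGroup E] [InnerProductSpace ℝ E] [CompleteSpace E]
  {f : E → ℝ} {s : Set E} {x y p : E} {L m : ℝ}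

lemma DifferentiableAt.hasDerivAt_comp_add_smul {d : E} {t : ℝ}
    (hf : DifferentiableAt ℝ f (x + t • d)) :
    HasDerivAt (fun r : ℝ => f (x + r • d)) ⟪gradient f (x + t • d), d⟫ t := by
  have hline : HasDerivAt (fun r : ℝ => x + r • d) d t := by
    simpa using ((hasDerivAt_id t).smul_const d).const_add x
  exact hf.hasGradientAt.hasFDerivAt.comp_hasDerivAt t hline

lemma Convex.apply_le_add_inner_gradient_add_sq (hs : Convex ℝ s)
    (hf : ∀ z ∈ s, DifferentiableAt ℝ f z)
    (hLip : ∀ a ∈ s, ∀ b ∈ s, ‖gradient f a - gradient f b‖ ≤ L * ‖a - b‖)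
    (hx : x ∈ s) (hy : y ∈ s) :
    f y ≤ f x + ⟪gradient f x, y - x⟫ + L / 2 * ‖y - x‖ ^ 2 := by
  have hmem : ∀ t ∈ Icc (0 : ℝ) 1, x + t • (y - x) ∈ s := fun t ht => hs.add_smul_sub_mem hx hy ht
  have key := le_add_deriv_add_of_deriv_sub_le (K := L * ‖y - x‖ ^ 2)
    (fun t ht => (hf _ (hmem t ht)).hasDerivAt_comp_add_smul) fun t ht => by
      rw [← inner_sub_left]
      calc ⟪gradient f (x + t • (y - x)) - gradient f (x + (0 : ℝ) • (y - x)), y - x⟫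
          ≤ ‖gradient f (x + t • (y - x)) - gradient f (x + (0 : ℝ) • (y - x))‖ * ‖y - x‖ :=
            real_inner_le_norm _ _
        _ ≤ L * ‖t • (y - x)‖ * ‖y - x‖ := by
            gcongr
            simpa using hLip _ (hmem t (Ioo_subset_Icc_self ht)) _ hx
        _ = L * ‖y - x‖ ^ 2 * t := by
            rw [norm_smul, Real.norm_of_nonneg ht.1.le]
            ring
  simp only [zero_smul, add_zero, one_smul, add_sub_cancel] at key
  linarith

lemma Convex.apply_add_smul_sub_le_of_step_le {t : ℝ} (hs : Convex ℝ s)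
    (hf : ∀ z ∈ s, DifferentiableAt ℝ f z)
    (hLip : ∀ a ∈ s, ∀ b ∈ s, ‖gradient f a - gradient f b‖ ≤ L * ‖a - b‖)
    (hx : x ∈ s) (hp : p ∈ s) (ht0 : 0 ≤ t) (ht1 : t ≤ 1)
    (hstep : t * (L * ‖p - x‖ ^ 2) ≤ -⟪gradient f x, p - x⟫) :
    f (x + t • (p - x)) ≤ f x + t * ⟪gradient f x, p - x⟫ / 2 := by
  have h := hs.apply_le_add_inner_gradient_add_sq hf hLip hx (hs.add_smul_sub_mem hx hp ⟨ht0, ht1⟩)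
  rw [add_sub_cancel_left, real_inner_smul_right, norm_smul, Real.norm_of_nonneg ht0] at h
  nlinarith [mul_le_mul_of_nonneg_left hstep ht0]

lemma StrongConvexOn.inner_gradient_le (hf : StrongConvexOn s m f)
    (hdiff : DifferentiableAt ℝ f x) (hx : x ∈ s) (hy : y ∈ s) :
    ⟪gradient f x, y - x⟫ ≤ f y - f x - m / 2 * ‖y - x‖ ^ 2 := by
  have hderiv := (show DifferentiableAt ℝ f (x + (0 : ℝ) • (y - x)) by simpa using hdiff)
    |>.hasDerivAt_comp_add_smul
  rw [zero_smul, add_zero, hasDerivAt_iff_tendsto_slope] at hderiv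
  have hrhs : Tendsto (fun t : ℝ => f y - f x - m / 2 * (1 - t) * ‖y - x‖ ^ 2) (𝓝[>] 0)
      (𝓝 (f y - f x - m / 2 * ‖y - x‖ ^ 2)) := by
    have hcont : Continuous fun t : ℝ => f y - f x - m / 2 * (1 - t) * ‖y - x‖ ^ 2 := by
      fun_prop
    simpa using (hcont.tendsto 0).mono_left nhdsWithin_le_nhds
  refine le_of_tendsto_of_tendsto (hderiv.mono_left (nhdsGT_le_nhdsNE 0)) hrhs ?_
  filter_upwards [Ioc_mem_nhdsGT zero_lt_one] with t ht
  rw [slope_def_field, sub_zero, zero_smul, add_zero, div_le_iff₀ ht.1]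
  nlinarith [hf.apply_add_smul_sub_le hx hy ht.1.le ht.2]

lemma frankWolfe_sub_le_sub_sub_mul_sq {xs : E} {σ γ Γ : ℝ} (hf : StrongConvexOn s m f)
    (hm : 0 ≤ m) (hdiff : ∀ z ∈ s, DifferentiableAt ℝ f z)
    (hLip : ∀ a ∈ s, ∀ b ∈ s, ‖gradient f a - gradient f b‖ ≤ L * ‖a - b‖) (hL : 0 < L)
    (hx : x ∈ s) (hp : p ∈ s) (hxs : xs ∈ s) (hmin : IsMinOn f s xs)
    (hpmin : ∀ q ∈ s, ⟪gradient f x, p - x⟫ ≤ ⟪gradient f x, q - x⟫)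
    (hv : ⟪gradient f x, p - x⟫ < 0) (hσ : ‖p - x‖ ≤ σ) (hγ : ‖gradient f x‖ ≤ γ)
    (hΓ0 : 0 ≤ Γ) (hΓ : Γ ≤ min (1 / (2 * γ * σ)) (1 / (2 * L * σ ^ 2))) :
    f (x + min 1 (|⟪gradient f x, p - x⟫| / (L * ‖p - x‖ ^ 2)) • (p - x)) - f xs ≤
      f x - f xs - Γ * (f x - f xs) ^ 2 := by
  set v := ⟪gradient f x, p - x⟫
  set t := min 1 (|v| / (L * ‖p - x‖ ^ 2))
  have hpx : 0 < ‖p - x‖ := norm_pos_iff.2 fun h => by simp [v, h] at hv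
  have habs : |v| = -v := abs_of_neg hv
  have hdecr : f (x + t • (p - x)) ≤ f x + t * v / 2 := by
    refine hf.1.apply_add_smul_sub_le_of_step_le hdiff hLip hx hp
      (le_min zero_le_one (by positivity)) (min_le_left _ _) ?_
    calc t * (L * ‖p - x‖ ^ 2) ≤ |v| / (L * ‖p - x‖ ^ 2) * (L * ‖p - x‖ ^ 2) := by
          gcongr
          exact min_le_right _ _
      _ = -v := by rw [div_mul_cancel₀ _ (by positivity), habs]
  have hgap : f x - f xs ≤ |v| := by
    have := hf.inner_gradient_le (hdiff x hx) hx hxs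
    nlinarith [hpmin xs hxs, norm_nonneg (xs - x)]
  have hvγσ : |v| ≤ γ * σ := (abs_real_inner_le_norm _ _).trans
    (mul_le_mul hγ hσ (norm_nonneg _) ((norm_nonneg _).trans hγ))
  have hrate : Γ * |v| ^ 2 ≤ t * |v| / 2 := mul_sq_le_min_mul_div_two hL hpx hσ (abs_nonneg v)
    hvγσ (hΓ.trans (min_le_left _ _)) (hΓ.trans (min_le_right _ _))
  have hsq : Γ * (f x - f xs) ^ 2 ≤ Γ * |v| ^ 2 := by
    gcongr
    exact sub_nonneg.2 (isMinOn_iff.1 hmin x hx)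
  have htv : t * v / 2 = -(t * |v| / 2) := by rw [habs]; ring
  linarith

end InnerProductSpace

theorem frank_wolfe_complexity_strongly_convex_general (n : ℕ) (C : Set (EuclideanSpace ℝ (Fin n)))
    (hCconv : Convex ℝ C)
    (M : ℝ) (hM : 0 < M)
    (f : EuclideanSpace ℝ (Fin n) → ℝ) (hf : ContDiff ℝ 1 f)
    (hsc : ∀ a ∈ C, ∀ b ∈ C, ∀ t : ℝ, 0 ≤ t → t ≤ 1 →
      f (t • a + (1 - t) • b) ≤ t * f a + (1 - t) * f b - M / 2 * t * (1 - t) * ‖a - b‖ ^ 2)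
    (L : ℝ) (hL : 0 < L)
    (hLip : ∀ a ∈ C, ∀ b ∈ C, ‖gradient f a - gradient f b‖ ≤ L * ‖a - b‖)
    (x p : ℕ → EuclideanSpace ℝ (Fin n)) (v : ℕ → ℝ)
    (hx0 : x 0 ∈ C) (hpC : ∀ k, p k ∈ C)
    (hpmin : ∀ k, ∀ q ∈ C, ⟪gradient f (x k), p k - x k⟫ ≤ ⟪gradient f (x k), q - x k⟫)
    (hv : ∀ k, v k = ⟪gradient f (x k), p k - x k⟫)
    (hiter : ∀ k, x (k + 1) =
      x k + (min 1 (|v k| / (L * ‖p k - x k‖ ^ 2))) • (p k - x k))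
    (hvneg : ∀ k, v k < 0)
    (xstar : EuclideanSpace ℝ (Fin n)) (hxstar : xstar ∈ C)
    (hopt : ∀ z ∈ C, f xstar ≤ f z)
    (σ : ℝ) (hσ : 0 < σ) (hσb : ∀ k, ‖p k - x k‖ ≤ σ)
    (γ : ℝ) (hγ : 0 < γ) (hγb : ∀ k, ‖gradient f (x k)‖ ≤ γ)
    (Γ : ℝ) (hΓ : Γ = min (1 / (2 * γ * σ)) (1 / (2 * L * σ ^ 2))) :
    ∀ k : ℕ, 1 ≤ k → ‖x k - xstar‖ ≤ Real.sqrt (2 / (Γ * M)) / Real.sqrt k := by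
  have hΓ0 : 0 < Γ := hΓ ▸ lt_min (by positivity) (by positivity)
  have hdiff : ∀ z ∈ C, DifferentiableAt ℝ f z := fun z _ => hf.differentiable one_ne_zero z
  have hconv : StrongConvexOn C M f := ⟨hCconv, fun a ha b hb s t hs ht hst => by
    obtain rfl : t = 1 - s := by linarith
    simpa only [smul_eq_mul, mul_assoc, mul_left_comm] using hsc a ha b hb s hs (by linarith)⟩
  have hmin : IsMinOn f C xstar := isMinOn_iff.2 hopt
  have hstep : ∀ k, x (k + 1) = x k + min 1 (|⟪gradient f (x k), p k - x k⟫| /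
      (L * ‖p k - x k‖ ^ 2)) • (p k - x k) := fun k => hv k ▸ hiter k
  have hxC := hCconv.forall_mem_of_add_smul_sub hx0 hpC
    (fun k => ⟨le_min zero_le_one (by positivity), min_le_left _ _⟩) hstep
  have hdec : ∀ k, f (x (k + 1)) - f xstar ≤
      f (x k) - f xstar - Γ * (f (x k) - f xstar) ^ 2 := fun k => by
    rw [hstep k]
    exact frankWolfe_sub_le_sub_sub_mul_sq hconv hM.le hdiff hLip hL (hxC k) (hpC k) hxstar hmin
      (hpmin k) (hv k ▸ hvneg k) (hσb k) (hγb k) hΓ0.le hΓ.le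
  intro k hk
  have hrate := le_one_div_mul_of_le_sub_mul_sq (e := fun k => f (x k) - f xstar) hΓ0 hdec hk
  have hgrowth := hconv.sq_norm_sub_le_of_isMinOn hxstar (hxC k) hmin
  have hk0 : (0 : ℝ) < k := by exact_mod_cast hk
  rw [← Real.sqrt_div' _ hk0.le]
  refine Real.le_sqrt_of_sq_le ?_
  rw [div_div, le_div_iff₀ (by positivity)]
  calc ‖x k - xstar‖ ^ 2 * (Γ * M * k) = 2 * (M / 2 * ‖x k - xstar‖ ^ 2) * (Γ * k) := by ring
    _ ≤ 2 * (1 / (Γ * k)) * (Γ * k) := by gcongr; linarith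
    _ = 2 := by field_simp

/-- Iteration-complexity bound for the Frank–Wolfe sequence under `M`-strong convexity:
`‖x k - x*‖ ≤ √(2/(Γ M))/√k` for all `k ≥ 1`, where `Γ = min (1/(2γσ)) (1/(2Lσ²))`. -/
theorem frank_wolfe_complexity_strongly_convex (n : ℕ) (C : Set (EuclideanSpace ℝ (Fin n)))
    (hCne : C.Nonempty) (hCcl : IsClosed C) (hCconv : Convex ℝ C)
    (M : ℝ) (hM : 0 < M)
    (f : EuclideanSpace ℝ (Fin n) → ℝ) (hf : ContDiff ℝ 1 f)
    (hsc : ∀ a ∈ C, ∀ b ∈ C, ∀ t : ℝ, 0 ≤ t → t ≤ 1 →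
      f (t • a + (1 - t) • b) ≤ t * f a + (1 - t) * f b - M / 2 * t * (1 - t) * ‖a - b‖ ^ 2)
    (L : ℝ) (hL : 0 < L)
    (hLip : ∀ a ∈ C, ∀ b ∈ C, ‖gradient f a - gradient f b‖ ≤ L * ‖a - b‖)
    (x p : ℕ → EuclideanSpace ℝ (Fin n)) (v : ℕ → ℝ)
    (hx0 : x 0 ∈ C) (hpC : ∀ k, p k ∈ C)
    (hpmin : ∀ k, ∀ q ∈ C, ⟪gradient f (x k), p k - x k⟫ ≤ ⟪gradient f (x k), q - x k⟫)
    (hv : ∀ k, v k = ⟪gradient f (x k), p k - x k⟫)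
    (hiter : ∀ k, x (k + 1) =
      x k + (min 1 (|v k| / (L * ‖p k - x k‖ ^ 2))) • (p k - x k))
    (hvneg : ∀ k, v k < 0)
    (xstar : EuclideanSpace ℝ (Fin n)) (hxstar : xstar ∈ C)
    (hlim : Filter.Tendsto x Filter.atTop (nhds xstar))
    (hopt : ∀ z ∈ C, f xstar ≤ f z)
    (σ : ℝ) (hσ : 0 < σ) (hσb : ∀ k, ‖p k - x k‖ ≤ σ)
    (γ : ℝ) (hγ : 0 < γ) (hγb : ∀ k, ‖gradient f (x k)‖ ≤ γ)
    (Γ : ℝ) (hΓ : Γ = min (1 / (2 * γ * σ)) (1 / (2 * L * σ ^ 2))) :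
    ∀ k : ℕ, 1 ≤ k → ‖x k - xstar‖ ≤ Real.sqrt (2 / (Γ * M)) / Real.sqrt k :=
  frank_wolfe_complexity_strongly_convex_general n C hCconv M hM f hf hsc L hL hLip x p v hx0 hpC
    hpmin hv hiter hvneg xstar hxstar hopt σ hσ hσb γ hγ hγb Γ hΓ
end
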